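/- arXiv:2603.14324 — 4 statements merged into one kernel-verified Lean document; each statement's English description precedes it below -/
import Mathlib

section
/- Fisher inconsistency of separated router/query surrogates: assume conditions (N1), (Q1), (Q2), (P1), (P2). Then for every b ∈ (0, C) and every ε ∈ (0, C − b) there exists δ ∈ (0, b) such that, for the two-expert binary-advice cost table c₁₀ = b − δ, c₁₁ = C, c₂₀ = b, c₂₁ = b + ε: (i) the Bayes comparison of row minima prefers expert 1, i.e. min{b − δ, C} < min{b, b + ε}; (ii) F(b − δ, C) > F(b, b + ε); and (iii) the pointwise separated surrogate objective (t_r, t₁, t₂) ↦ Ψ₁(t_r)·[ν(b−δ)·G(t₁)·Φ₀(U(t₁)) + ν(C)·G(t₁)·Φ₁(U(t₁))] + Ψ₂(t_r)·[ν(b)·G(t₂)·Φ₀(U(t₂)) + ν(b+ε)·G(t₂)·Φ₁(U(t₂))] has a unique global minimizer (t_r*, t₁*, t₂*) ∈ ℝ³ and this minimizer satisfies t_r* > 0, so that under the decoding rule r = 1 + 1{t_r ≥ 0} the surrogate minimizer selects expert 2 while the Bayes-optimal expert is 1. -/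
/-- Logistic envelope `Φ₀(u) = log(1 + e^{-u})`. -/
noncomputable def Phi0 (u : ℝ) : ℝ := Real.log (1 + Real.exp (-u))

/-- Logistic envelope `Φ₁(u) = log(1 + e^{u})`. -/
noncomputable def Phi1 (u : ℝ) : ℝ := Real.log (1 + Real.exp u)

/-- Row objective `t ↦ ν(u)·G(t)·Φ₀(U(t)) + ν(v)·G(t)·Φ₁(U(t))`. -/
noncomputable def rowObj (ν G U : ℝ → ℝ) (u v t : ℝ) : ℝ :=
  ν u * G t * Phi0 (U t) + ν v * G t * Phi1 (U t)

/-- Expert summary `F(u,v) = inf_t rowObj ν G U u v t`. -/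
noncomputable def expertSummary (ν G U : ℝ → ℝ) (u v : ℝ) : ℝ :=
  ⨅ t : ℝ, rowObj ν G U u v t

/-- Pointwise separated router/query surrogate objective on scores
`p = (t_r, t₁, t₂)` for the 2-expert binary-advice cost table `(c₁₀,c₁₁;c₂₀,c₂₁)`. -/
noncomputable def sepObj (Ψ₁ Ψ₂ ν G U : ℝ → ℝ) (c10 c11 c20 c21 : ℝ)
    (p : ℝ × ℝ × ℝ) : ℝ :=
  Ψ₁ p.1 * rowObj ν G U c10 c11 p.2.1 + Ψ₂ p.1 * rowObj ν G U c20 c21 p.2.2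

/-!
Each row objective with `u > 0` is coercive and strictly convex, so it has a unique minimiser
and `F(u, v)` is its minimum value. Since `ν` is increasing, `F(b, b + ε) < F(b, C)`, and
`F(u, v) ≥ (ν u / ν w) · F(w, v)` whenever `ν u ≤ ν w`; by continuity of `ν` at `b` the strict
gap survives replacing `b` by `b - δ` in the first row, for `δ` small. So row 1 has the smaller
Bayes cost `b - δ` but the larger profiled surrogate value.

The separated objective decouples: at its minimum the query scores minimise their rows, with
values `m₁ = F(b - δ, C) > m₂ = F(b, b + ε)`, and the router score minimises
`Ψ₁(t) m₁ + Ψ₂(t) m₂`, whose derivative `Ψ₂'(t) m₁ (m₂ / m₁ - ρ(t))` changes sign exactly at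
the solution of `ρ(t) = m₂ / m₁ < 1 = ρ(0)`, which is therefore positive.
-/

open Set Filter Topology

lemma le_of_forall_ne_lt {α β : Type*} [Preorder β] {f : α → β} {x₀ : α}
    (h : ∀ x ≠ x₀, f x₀ < f x) (x : α) : f x₀ ≤ f x := by
  rcases eq_or_ne x x₀ with rfl | hx
  exacts [le_rfl, (h x hx).le]

lemma eq_of_forall_ne_lt_of_forall_le {α β : Type*} [Preorder β] {f : α → β} {x₀ : α}
    (h : ∀ x ≠ x₀, f x₀ < f x) {x₁ : α} (h₁ : ∀ x, f x₁ ≤ f x) : x₁ = x₀ := by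
  by_contra hne
  exact (h x₁ hne).not_ge (h₁ x₀)

lemma StrictConvexOn.forall_ne_lt_of_forall_le {E : Type*} [AddCommGroup E] [Module ℝ E]
    {f : E → ℝ} (hf : StrictConvexOn ℝ univ f) {x₀ : E} (h : ∀ x, f x₀ ≤ f x) :
    ∀ x ≠ x₀, f x₀ < f x := by
  intro x hx
  refine (h x).lt_of_ne fun hfx => hx (hf.eq_of_isMinOn ?_ (fun y _ => h y) trivial trivial)
  exact fun y _ => hfx ▸ h y

lemma exists_forall_ne_lt_of_strictConvexOn {E : Type*} [NormedAddCommGroup E]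
    [NormedSpace ℝ E] [ProperSpace E] {f : E → ℝ} (hc : Continuous f)
    (hcoer : Tendsto f (cocompact E) atTop) (hf : StrictConvexOn ℝ univ f) :
    ∃ x₀, ∀ x ≠ x₀, f x₀ < f x :=
  let ⟨x₀, h⟩ := hc.exists_forall_le hcoer
  ⟨x₀, hf.forall_ne_lt_of_forall_le h⟩

lemma forall_ne_lt_of_hasDerivAt {g g' : ℝ → ℝ} {x₀ : ℝ}
    (hg : ∀ x, HasDerivAt g (g' x) x) (hneg : ∀ x < x₀, g' x < 0) (hpos : ∀ x, x₀ < x → 0 < g' x) :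
    ∀ x ≠ x₀, g x₀ < g x := by
  have hcont : ContinuousOn g univ := fun x _ => (hg x).continuousAt.continuousWithinAt
  have hanti : StrictAntiOn g (Iic x₀) :=
    strictAntiOn_of_hasDerivWithinAt_neg (convex_Iic x₀) (hcont.mono (subset_univ _))
      (fun x _ => (hg x).hasDerivWithinAt) (fun x hx => hneg x (by simpa using hx))
  have hmono : StrictMonoOn g (Ici x₀) :=
    strictMonoOn_of_hasDerivWithinAt_pos (convex_Ici x₀) (hcont.mono (subset_univ _))
      (fun x _ => (hg x).hasDerivWithinAt) (fun x hx => hpos x (by simpa using hx))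
  intro x hx
  rcases hx.lt_or_gt with hlt | hgt
  · exact hanti (mem_Iic.2 hlt.le) (mem_Iic.2 le_rfl) hlt
  · exact hmono (mem_Ici.2 le_rfl) (mem_Ici.2 hgt.le) hgt

lemma forall_ne_lt_of_separable {α β γ : Type*} {a b : γ → ℝ} {f₁ : α → ℝ} {f₂ : β → ℝ}
    {r : γ} {s : α} {t : β} (ha : ∀ x, 0 < a x) (hb : ∀ x, 0 < b x)
    (hr : ∀ x ≠ r, a r * f₁ s + b r * f₂ t < a x * f₁ s + b x * f₂ t)
    (hs : ∀ y ≠ s, f₁ s < f₁ y) (ht : ∀ z ≠ t, f₂ t < f₂ z) :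
    ∀ p ≠ (r, s, t), a r * f₁ s + b r * f₂ t < a p.1 * f₁ p.2.1 + b p.1 * f₂ p.2.2 := by
  rintro ⟨x, y, z⟩ hp
  have hy := mul_le_mul_of_nonneg_left (le_of_forall_ne_lt hs y) (ha x).le
  have hz := mul_le_mul_of_nonneg_left (le_of_forall_ne_lt ht z) (hb x).le
  rcases eq_or_ne x r with rfl | hx
  · have hyz : y ≠ s ∨ z ≠ t := by
      by_contra! h
      exact hp (by rw [h.1, h.2])
    rcases hyz with hy' | hz'
    · have := mul_lt_mul_of_pos_left (hs y hy') (ha x)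
      dsimp only
      linarith
    · have := mul_lt_mul_of_pos_left (ht z hz') (hb x)
      dsimp only
      linarith
  · have := hr x hx
    dsimp only
    linarith

lemma forall_ne_lt_of_ratio_eq {Ψ₁ Ψ₂ Ψ₁' Ψ₂' : ℝ → ℝ}
    (hΨ₁ : ∀ t, HasDerivAt Ψ₁ (Ψ₁' t) t) (hΨ₂ : ∀ t, HasDerivAt Ψ₂ (Ψ₂' t) t)
    (hΨ₂' : ∀ t, 0 < Ψ₂' t)
    (hρ : StrictAnti fun t => -Ψ₁' t / Ψ₂' t) {m₁ m₂ r : ℝ} (hm₁ : 0 < m₁)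
    (hr : -Ψ₁' r / Ψ₂' r = m₂ / m₁) :
    ∀ t ≠ r, Ψ₁ r * m₁ + Ψ₂ r * m₂ < Ψ₁ t * m₁ + Ψ₂ t * m₂ := by
  have hsign :
      ∀ t, Ψ₁' t * m₁ + Ψ₂' t * m₂ = Ψ₂' t * m₁ * (m₂ / m₁ - -Ψ₁' t / Ψ₂' t) := by
    intro t
    field_simp [(hΨ₂' t).ne']
    ring
  refine forall_ne_lt_of_hasDerivAt
    (fun t => ((hΨ₁ t).mul_const m₁).add ((hΨ₂ t).mul_const m₂)) (fun t ht => ?_) (fun t ht => ?_)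
  · have := hρ ht
    rw [hsign]
    exact mul_neg_of_pos_of_neg (mul_pos (hΨ₂' t) hm₁) (by simp only at this; linarith)
  · have := hρ ht
    rw [hsign]
    exact mul_pos (mul_pos (hΨ₂' t) hm₁) (by simp only at this; linarith)

lemma exists_sub_mem_Ioo_of_eventually {P : ℝ → Prop} {b : ℝ} (hb : 0 < b)
    (h : ∀ᶠ u in 𝓝 b, P u) : ∃ δ ∈ Ioo 0 b, P (b - δ) := by
  obtain ⟨u, ⟨hPu, hu⟩, hub⟩ :=
    (((h.and (Ioi_mem_nhds hb)).filter_mono nhdsWithin_le_nhds).and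
      (self_mem_nhdsWithin (s := Iio b))).exists
  exact ⟨b - u, ⟨sub_pos.2 hub, by linarith⟩, by rwa [sub_sub_cancel]⟩

lemma Phi0_pos (u : ℝ) : 0 < Phi0 u :=
  Real.log_pos (lt_add_of_pos_right 1 (Real.exp_pos _))

lemma Phi1_pos (u : ℝ) : 0 < Phi1 u :=
  Real.log_pos (lt_add_of_pos_right 1 (Real.exp_pos _))

lemma continuous_Phi0 : Continuous Phi0 :=
  Continuous.log (by fun_prop) fun u => by positivity

lemma continuous_Phi1 : Continuous Phi1 :=
  Continuous.log (by fun_prop) fun u => by positivity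

section Row

variable {ν G U : ℝ → ℝ} {u v w : ℝ}

lemma continuous_rowObj (hG : Continuous G) (hU : Continuous U) (u v : ℝ) :
    Continuous (rowObj ν G U u v) := by
  unfold rowObj
  have := continuous_Phi0.comp hU
  have := continuous_Phi1.comp hU
  fun_prop

lemma rowObj_pos (hG : ∀ t, 0 < G t) (hu : 0 < ν u) (hv : 0 ≤ ν v) (t : ℝ) :
    0 < rowObj ν G U u v t := by
  have := hG t
  have := Phi0_pos (U t)
  have := Phi1_pos (U t)
  unfold rowObj
  positivity

lemma rowObj_lt_rowObj_right (hG : ∀ t, 0 < G t) (hvw : ν v < ν w) (t : ℝ) :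
    rowObj ν G U u v t < rowObj ν G U u w t := by
  have := mul_lt_mul_of_pos_right hvw (mul_pos (hG t) (Phi1_pos (U t)))
  unfold rowObj
  linarith

lemma div_mul_rowObj_le (hG : ∀ t, 0 < G t) (huw : ν u ≤ ν w) (hw : 0 < ν w)
    (hv : 0 ≤ ν v) (t : ℝ) : ν u / ν w * rowObj ν G U w v t ≤ rowObj ν G U u v t := by
  have hle : ν u / ν w ≤ 1 := (div_le_one hw).2 huw
  have h₁ : 0 ≤ ν v * G t * Phi1 (U t) := by
    have := hG t
    have := Phi1_pos (U t)
    positivity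
  calc ν u / ν w * rowObj ν G U w v t
      = ν u * G t * Phi0 (U t) + ν u / ν w * (ν v * G t * Phi1 (U t)) := by
        unfold rowObj
        field_simp
    _ ≤ rowObj ν G U u v t := by
        unfold rowObj
        nlinarith

lemma expertSummary_le_rowObj (hG : ∀ t, 0 < G t) (hu : 0 < ν u) (hv : 0 ≤ ν v) (t : ℝ) :
    expertSummary ν G U u v ≤ rowObj ν G U u v t :=
  ciInf_le ⟨0, by rintro _ ⟨s, rfl⟩; exact (rowObj_pos hG hu hv s).le⟩ t

lemma expertSummary_eq_of_forall_le {t₀ : ℝ}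
    (h : ∀ t, rowObj ν G U u v t₀ ≤ rowObj ν G U u v t) :
    expertSummary ν G U u v = rowObj ν G U u v t₀ :=
  le_antisymm (ciInf_le ⟨_, forall_mem_range.2 h⟩ t₀) (le_ciInf h)

lemma expertSummary_lt_of_lt (hG : ∀ t, 0 < G t) (hu : 0 < ν u) (hv : 0 ≤ ν v)
    (hvw : ν v < ν w) {t₀ : ℝ} (h : ∀ t, rowObj ν G U u w t₀ ≤ rowObj ν G U u w t) :
    expertSummary ν G U u v < expertSummary ν G U u w := by
  rw [expertSummary_eq_of_forall_le h]
  exact (expertSummary_le_rowObj hG hu hv t₀).trans_lt (rowObj_lt_rowObj_right hG hvw t₀)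

lemma div_mul_expertSummary_le (hG : ∀ t, 0 < G t) (hu : 0 ≤ ν u) (huw : ν u ≤ ν w)
    (hw : 0 < ν w) (hv : 0 ≤ ν v) :
    ν u / ν w * expertSummary ν G U w v ≤ expertSummary ν G U u v :=
  le_ciInf fun t => (mul_le_mul_of_nonneg_left (expertSummary_le_rowObj hG hw hv t)
    (div_nonneg hu hw.le)).trans (div_mul_rowObj_le hG huw hw hv t)

lemma exists_lt_expertSummary_sub {b c : ℝ} (hG : ∀ t, 0 < G t) (hb : 0 < b)
    (hνb : ContinuousAt ν b) (hνpos : ∀ u ∈ Ioc 0 b, 0 < ν u)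
    (hνmono : MonotoneOn ν (Ioc 0 b)) (hv : 0 ≤ ν v) (hc : c < expertSummary ν G U b v) :
    ∃ δ ∈ Ioo 0 b, c < expertSummary ν G U (b - δ) v := by
  have hνb₀ := hνpos b ⟨hb, le_rfl⟩
  have hlim : Tendsto (fun u => ν u / ν b * expertSummary ν G U b v) (𝓝 b)
      (𝓝 (expertSummary ν G U b v)) := by
    simpa [div_self hνb₀.ne'] using ((hνb.div_const (ν b)).mul_const _).tendsto
  obtain ⟨δ, hδ, hδc⟩ := exists_sub_mem_Ioo_of_eventually hb (hlim.eventually_const_lt hc)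
  have hbδ : b - δ ∈ Ioc 0 b := ⟨by linarith [hδ.2], by linarith [hδ.1]⟩
  exact ⟨δ, hδ, hδc.trans_le <| div_mul_expertSummary_le hG (hνpos _ hbδ).le
    (hνmono hbδ ⟨hb, le_rfl⟩ hbδ.2) hνb₀ hv⟩

end Row

theorem fisher_inconsistency_separated_surrogates_general
    (C : ℝ)
    -- (N1)
    (ν ν' : ℝ → ℝ)
    (hνcont : ContinuousOn ν (Set.Icc 0 C))
    (hνpos : ∀ u ∈ Set.Icc 0 C, 0 < ν u)
    (hνderiv : ∀ u ∈ Set.Ioo 0 C, HasDerivAt ν (ν' u) u)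
    (hν'pos : ∀ u ∈ Set.Ioo 0 C, 0 < ν' u)
    -- (Q1)
    (G U : ℝ → ℝ)
    (hGcont : Continuous G) (hGpos : ∀ t, 0 < G t)
    (hUcont : Continuous U)
    -- (Q2)
    (hQ2 : ∀ u ∈ Set.Icc 0 C, ∀ v ∈ Set.Icc 0 C, ¬(u = 0 ∧ v = 0) →
      Filter.Tendsto (fun t => rowObj ν G U u v t) (Filter.cocompact ℝ) Filter.atTop ∧
      StrictConvexOn ℝ Set.univ (fun t => rowObj ν G U u v t))
    -- (P1)
    (Ψ₁ Ψ₂ Ψ₁' Ψ₂' : ℝ → ℝ)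
    (hΨ₁d : ∀ t, HasDerivAt Ψ₁ (Ψ₁' t) t)
    (hΨ₂d : ∀ t, HasDerivAt Ψ₂ (Ψ₂' t) t)
    (hΨ₁pos : ∀ t, 0 < Ψ₁ t) (hΨ₂pos : ∀ t, 0 < Ψ₂ t)
    (hΨ₂'pos : ∀ t, 0 < Ψ₂' t)
    -- (P2)
    (hρanti : StrictAnti (fun t => -Ψ₁' t / Ψ₂' t))
    (hρrange : Set.range (fun t => -Ψ₁' t / Ψ₂' t) = Set.Ioi (0 : ℝ))
    (hρ0 : -Ψ₁' 0 / Ψ₂' 0 = 1) :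
    ∀ b ∈ Set.Ioo (0 : ℝ) C, ∀ ε ∈ Set.Ioo (0 : ℝ) (C - b),
      ∃ δ ∈ Set.Ioo (0 : ℝ) b,
        -- (i) Bayes prefers expert 1
        (min (b - δ) C < min b (b + ε)) ∧
        -- (ii) profiled-summary reversal
        (expertSummary ν G U b (b + ε) < expertSummary ν G U (b - δ) C) ∧
        -- (iii) unique global minimizer with positive router score
        (∃ m : ℝ × ℝ × ℝ, 0 < m.1 ∧
          (∀ p : ℝ × ℝ × ℝ,
            sepObj Ψ₁ Ψ₂ ν G U (b - δ) C b (b + ε) m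
              ≤ sepObj Ψ₁ Ψ₂ ν G U (b - δ) C b (b + ε) p) ∧
          (∀ m' : ℝ × ℝ × ℝ,
            (∀ p : ℝ × ℝ × ℝ,
              sepObj Ψ₁ Ψ₂ ν G U (b - δ) C b (b + ε) m'
                ≤ sepObj Ψ₁ Ψ₂ ν G U (b - δ) C b (b + ε) p) → m' = m)) := by
  rintro b ⟨hb0, hbC⟩ ε ⟨hε0, hεC⟩
  have hν : StrictMonoOn ν (Icc 0 C) :=
    strictMonoOn_of_hasDerivWithinAt_pos (convex_Icc 0 C) hνcont
      (fun x hx => (hνderiv x (by simpa using hx)).hasDerivWithinAt)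
      (fun x hx => hν'pos x (by simpa using hx))
  have hrow : ∀ u ∈ Ioc 0 C, ∀ v ∈ Icc 0 C, ∃ t₀, ∀ t ≠ t₀,
      rowObj ν G U u v t₀ < rowObj ν G U u v t := fun u hu v hv =>
    have hQ := hQ2 u (Ioc_subset_Icc_self hu) v hv fun h => hu.1.ne' h.1
    exists_forall_ne_lt_of_strictConvexOn (continuous_rowObj hGcont hUcont u v) hQ.1 hQ.2
  have hbI : b ∈ Icc 0 C := ⟨hb0.le, hbC.le⟩
  have hCI : C ∈ Icc 0 C := ⟨by linarith, le_rfl⟩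
  have hbεI : b + ε ∈ Icc 0 C := ⟨by linarith, by linarith⟩
  obtain ⟨tC, htC⟩ := hrow b ⟨hb0, hbC.le⟩ C hCI
  have hgap : expertSummary ν G U b (b + ε) < expertSummary ν G U b C :=
    expertSummary_lt_of_lt hGpos (hνpos b hbI) (hνpos _ hbεI).le
      (hν hbεI hCI (by linarith)) (le_of_forall_ne_lt htC)
  have hbC' : Ioc 0 b ⊆ Icc 0 C := fun u hu => ⟨hu.1.le, hu.2.trans hbC.le⟩
  obtain ⟨δ, hδ, hF⟩ := exists_lt_expertSummary_sub hGpos hb0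
    (hνderiv b ⟨hb0, hbC⟩).continuousAt (fun u hu => hνpos u (hbC' hu))
    (hν.monotoneOn.mono hbC') (hνpos C hCI).le hgap
  obtain ⟨t₁, ht₁⟩ := hrow (b - δ) ⟨by linarith [hδ.2], by linarith [hδ.1]⟩ C hCI
  obtain ⟨t₂, ht₂⟩ := hrow b ⟨hb0, hbC.le⟩ (b + ε) hbεI
  have hm : rowObj ν G U b (b + ε) t₂ < rowObj ν G U (b - δ) C t₁ := by
    rwa [expertSummary_eq_of_forall_le (le_of_forall_ne_lt ht₁),
      expertSummary_eq_of_forall_le (le_of_forall_ne_lt ht₂)] at hF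
  have hm₂ := rowObj_pos (U := U) hGpos (hνpos b hbI) (hνpos _ hbεI).le t₂
  have hm₁ := hm₂.trans hm
  obtain ⟨r, hr⟩ : rowObj ν G U b (b + ε) t₂ / rowObj ν G U (b - δ) C t₁ ∈
      range fun t => -Ψ₁' t / Ψ₂' t := hρrange ▸ div_pos hm₂ hm₁
  have hsep : ∀ p ≠ (r, t₁, t₂), sepObj Ψ₁ Ψ₂ ν G U (b - δ) C b (b + ε) (r, t₁, t₂) <
      sepObj Ψ₁ Ψ₂ ν G U (b - δ) C b (b + ε) p :=
    forall_ne_lt_of_separable hΨ₁pos hΨ₂pos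
      (forall_ne_lt_of_ratio_eq hΨ₁d hΨ₂d hΨ₂'pos hρanti hm₁ hr) ht₁ ht₂
  refine ⟨δ, hδ, ?_, hF, (r, t₁, t₂), ?_, le_of_forall_ne_lt hsep,
    fun m' hm' => eq_of_forall_ne_lt_of_forall_le hsep hm'⟩
  · rw [min_eq_left, min_eq_left] <;> linarith [hδ.1]
  · exact hρanti.lt_iff_gt.1 (hr.trans_lt (hρ0 ▸ (div_lt_one hm₁).2 hm))

/-- **Fisher inconsistency of separated router/query surrogates.**
Under (N1), (Q1), (Q2), (P1), (P2): for every `b ∈ (0,C)` and `ε ∈ (0,C−b)` there is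
`δ ∈ (0,b)` such that for the cost table `c₁₀ = b−δ, c₁₁ = C, c₂₀ = b, c₂₁ = b+ε`:
(i) the Bayes comparison of row minima prefers expert 1;
(ii) `F(b−δ,C) > F(b,b+ε)`;
(iii) the pointwise separated surrogate objective has a unique global minimizer
`(t_r*, t₁*, t₂*)` with `t_r* > 0`, so under the decoding rule `r = 1 + 1{t_r ≥ 0}`
the surrogate minimizer selects expert 2 while the Bayes-optimal expert is 1. -/
theorem fisher_inconsistency_separated_surrogates
    (C : ℝ) (hC : 0 < C)
    -- (N1)
    (ν ν' : ℝ → ℝ)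
    (hνcont : ContinuousOn ν (Set.Icc 0 C))
    (hνpos : ∀ u ∈ Set.Icc 0 C, 0 < ν u)
    (hνderiv : ∀ u ∈ Set.Ioo 0 C, HasDerivAt ν (ν' u) u)
    (hν'pos : ∀ u ∈ Set.Ioo 0 C, 0 < ν' u)
    -- (Q1)
    (G U : ℝ → ℝ)
    (hGcont : Continuous G) (hGpos : ∀ t, 0 < G t)
    (hUcont : Continuous U) (hUmono : StrictMono U) (hUsurj : Function.Surjective U)
    -- (Q2)
    (hQ2 : ∀ u ∈ Set.Icc 0 C, ∀ v ∈ Set.Icc 0 C, ¬(u = 0 ∧ v = 0) →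
      Filter.Tendsto (fun t => rowObj ν G U u v t) (Filter.cocompact ℝ) Filter.atTop ∧
      StrictConvexOn ℝ Set.univ (fun t => rowObj ν G U u v t))
    -- (P1)
    (Ψ₁ Ψ₂ Ψ₁' Ψ₂' Ψ₁'' Ψ₂'' : ℝ → ℝ)
    (hΨ₁d : ∀ t, HasDerivAt Ψ₁ (Ψ₁' t) t) (hΨ₁d2 : ∀ t, HasDerivAt Ψ₁' (Ψ₁'' t) t)
    (hΨ₂d : ∀ t, HasDerivAt Ψ₂ (Ψ₂' t) t) (hΨ₂d2 : ∀ t, HasDerivAt Ψ₂' (Ψ₂'' t) t)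
    (hΨ₁''cont : Continuous Ψ₁'') (hΨ₂''cont : Continuous Ψ₂'')
    (hΨ₁pos : ∀ t, 0 < Ψ₁ t) (hΨ₂pos : ∀ t, 0 < Ψ₂ t)
    (hΨ₁'neg : ∀ t, Ψ₁' t < 0) (hΨ₂'pos : ∀ t, 0 < Ψ₂' t)
    (hΨ₁''pos : ∀ t, 0 < Ψ₁'' t) (hΨ₂''pos : ∀ t, 0 < Ψ₂'' t)
    -- (P2)
    (hρanti : StrictAnti (fun t => -Ψ₁' t / Ψ₂' t))
    (hρrange : Set.range (fun t => -Ψ₁' t / Ψ₂' t) = Set.Ioi (0 : ℝ))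
    (hρ0 : -Ψ₁' 0 / Ψ₂' 0 = 1) :
    ∀ b ∈ Set.Ioo (0 : ℝ) C, ∀ ε ∈ Set.Ioo (0 : ℝ) (C - b),
      ∃ δ ∈ Set.Ioo (0 : ℝ) b,
        -- (i) Bayes prefers expert 1
        (min (b - δ) C < min b (b + ε)) ∧
        -- (ii) profiled-summary reversal
        (expertSummary ν G U b (b + ε) < expertSummary ν G U (b - δ) C) ∧
        -- (iii) unique global minimizer with positive router score
        (∃ m : ℝ × ℝ × ℝ, 0 < m.1 ∧
          (∀ p : ℝ × ℝ × ℝ,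
            sepObj Ψ₁ Ψ₂ ν G U (b - δ) C b (b + ε) m
              ≤ sepObj Ψ₁ Ψ₂ ν G U (b - δ) C b (b + ε) p) ∧
          (∀ m' : ℝ × ℝ × ℝ,
            (∀ p : ℝ × ℝ × ℝ,
              sepObj Ψ₁ Ψ₂ ν G U (b - δ) C b (b + ε) m'
                ≤ sepObj Ψ₁ Ψ₂ ν G U (b - δ) C b (b + ε) p) → m' = m)) :=
  fisher_inconsistency_separated_surrogates_general C ν ν' hνcont hνpos hνderiv hν'pos G U hGcont
    hGpos hUcont hQ2 Ψ₁ Ψ₂ Ψ₁' Ψ₂' hΨ₁d hΨ₂d hΨ₁pos hΨ₂pos hΨ₂'pos hρanti hρrange hρ0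
end

section
/- Router minimizer and its sign: assume conditions (P1) and (P2). Then for every A > 0 and B > 0, the function t ↦ A·Ψ₁(t) + B·Ψ₂(t) has a unique global minimizer t*(A, B) ∈ ℝ, and this minimizer satisfies: t*(A, B) > 0 if A > B, t*(A, B) = 0 if A = B, and t*(A, B) < 0 if A < B. In particular, under the decoding rule r = 1 + 1{t ≥ 0}, the router selects the expert with the smaller profiled summary. -/
/-! The derivative of `f = A Ψ₁ + B Ψ₂` is `Ψ₂' (B - A ρ)`, so, as `Ψ₂' > 0` and `ρ` decreases
strictly, `f'` changes sign from negative to positive exactly at the unique `t` with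
`ρ t = B / A`, which is therefore the unique global minimizer. Since `ρ 0 = 1` and `ρ` is
decreasing, `t` has the sign of `1 - B / A`, i.e. of `A - B`. -/

theorem lt_of_ne_of_hasDerivAt_neg_of_pos {f f' : ℝ → ℝ} {t : ℝ}
    (hf : ∀ s, HasDerivAt f (f' s) s) (hneg : ∀ s < t, f' s < 0) (hpos : ∀ s, t < s → 0 < f' s) :
    ∀ s ≠ t, f t < f s := by
  have hcont : Continuous f := continuous_iff_continuousAt.2 fun s => (hf s).continuousAt
  have hanti : StrictAntiOn f (Set.Iic t) :=
    strictAntiOn_of_hasDerivWithinAt_neg (convex_Iic t) hcont.continuousOn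
      (fun s _ => (hf s).hasDerivWithinAt) (by simpa using hneg)
  have hmono : StrictMonoOn f (Set.Ici t) :=
    strictMonoOn_of_hasDerivWithinAt_pos (convex_Ici t) hcont.continuousOn
      (fun s _ => (hf s).hasDerivWithinAt) (by simpa using hpos)
  intro s hs
  rcases hs.lt_or_gt with hst | hts
  · exact hanti hst.le Set.self_mem_Iic hst
  · exact hmono Set.self_mem_Ici hts.le hts

theorem mul_add_mul_neg_iff_div_lt {A B a b : ℝ} (hA : 0 < A) (hb : 0 < b) :
    A * a + B * b < 0 ↔ B / A < -a / b := by
  rw [div_lt_div_iff₀ hA hb]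
  constructor <;> intro h <;> linarith

theorem mul_add_mul_pos_iff_lt_div {A B a b : ℝ} (hA : 0 < A) (hb : 0 < b) :
    0 < A * a + B * b ↔ -a / b < B / A := by
  rw [div_lt_div_iff₀ hb hA]
  constructor <;> intro h <;> linarith

theorem router_minimizer_sign_general
    -- (P1)
    (Ψ₁ Ψ₂ Ψ₁' Ψ₂' : ℝ → ℝ)
    (hΨ₁d : ∀ t, HasDerivAt Ψ₁ (Ψ₁' t) t)
    (hΨ₂d : ∀ t, HasDerivAt Ψ₂ (Ψ₂' t) t)
    (hΨ₂'pos : ∀ t, 0 < Ψ₂' t)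
    -- (P2)
    (hρanti : StrictAnti (fun t => -Ψ₁' t / Ψ₂' t))
    (hρrange : Set.range (fun t => -Ψ₁' t / Ψ₂' t) = Set.Ioi (0 : ℝ))
    (hρ0 : -Ψ₁' 0 / Ψ₂' 0 = 1) :
    ∀ A B : ℝ, 0 < A → 0 < B →
      ∃ t : ℝ,
        (∀ s : ℝ, A * Ψ₁ t + B * Ψ₂ t ≤ A * Ψ₁ s + B * Ψ₂ s) ∧
        (∀ t' : ℝ, (∀ s : ℝ, A * Ψ₁ t' + B * Ψ₂ t' ≤ A * Ψ₁ s + B * Ψ₂ s) → t' = t) ∧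
        (B < A → 0 < t) ∧ (A = B → t = 0) ∧ (A < B → t < 0) := by
  intro A B hA hB
  obtain ⟨t, ht⟩ : B / A ∈ Set.range (fun t => -Ψ₁' t / Ψ₂' t) :=
    hρrange ▸ Set.mem_Ioi.2 (div_pos hB hA)
  simp only at ht
  have hmin : ∀ s ≠ t, A * Ψ₁ t + B * Ψ₂ t < A * Ψ₁ s + B * Ψ₂ s :=
    lt_of_ne_of_hasDerivAt_neg_of_pos (fun s => ((hΨ₁d s).const_mul A).add ((hΨ₂d s).const_mul B))
      (fun s hs => (mul_add_mul_neg_iff_div_lt hA (hΨ₂'pos s)).2 (ht ▸ hρanti hs))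
      (fun s hs => (mul_add_mul_pos_iff_lt_div hA (hΨ₂'pos s)).2 (ht ▸ hρanti hs))
  refine ⟨t, fun s => ?_, fun t' ht' => ?_, fun hBA => ?_, fun hAB => ?_, fun hAB => ?_⟩
  · rcases eq_or_ne s t with rfl | hs
    · exact le_rfl
    · exact (hmin s hs).le
  · by_contra hne
    exact (hmin t' hne).not_ge (ht' t)
  · rw [← hρanti.lt_iff_gt, ht, hρ0, div_lt_one hA]
    exact hBA
  · apply hρanti.injective
    simp only [ht, hρ0, hAB, div_self hB.ne']
  · rw [← hρanti.lt_iff_gt, ht, hρ0, one_lt_div hA]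
    exact hAB

/-- **Router minimizer and its sign.**
Under (P1) and (P2), for all `A, B > 0` the function `t ↦ A·Ψ₁(t) + B·Ψ₂(t)` has a unique
global minimizer `t*`, and `t* > 0` if `A > B`, `t* = 0` if `A = B`, `t* < 0` if `A < B`.
Under the decoding rule `r = 1 + 1{t ≥ 0}`, the router thus selects the expert with the
smaller profiled summary. -/
theorem router_minimizer_sign
    -- (P1)
    (Ψ₁ Ψ₂ Ψ₁' Ψ₂' Ψ₁'' Ψ₂'' : ℝ → ℝ)
    (hΨ₁d : ∀ t, HasDerivAt Ψ₁ (Ψ₁' t) t) (hΨ₁d2 : ∀ t, HasDerivAt Ψ₁' (Ψ₁'' t) t)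
    (hΨ₂d : ∀ t, HasDerivAt Ψ₂ (Ψ₂' t) t) (hΨ₂d2 : ∀ t, HasDerivAt Ψ₂' (Ψ₂'' t) t)
    (hΨ₁''cont : Continuous Ψ₁'') (hΨ₂''cont : Continuous Ψ₂'')
    (hΨ₁pos : ∀ t, 0 < Ψ₁ t) (hΨ₂pos : ∀ t, 0 < Ψ₂ t)
    (hΨ₁'neg : ∀ t, Ψ₁' t < 0) (hΨ₂'pos : ∀ t, 0 < Ψ₂' t)
    (hΨ₁''pos : ∀ t, 0 < Ψ₁'' t) (hΨ₂''pos : ∀ t, 0 < Ψ₂'' t)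
    -- (P2)
    (hρanti : StrictAnti (fun t => -Ψ₁' t / Ψ₂' t))
    (hρrange : Set.range (fun t => -Ψ₁' t / Ψ₂' t) = Set.Ioi (0 : ℝ))
    (hρ0 : -Ψ₁' 0 / Ψ₂' 0 = 1) :
    ∀ A B : ℝ, 0 < A → 0 < B →
      ∃ t : ℝ,
        (∀ s : ℝ, A * Ψ₁ t + B * Ψ₂ t ≤ A * Ψ₁ s + B * Ψ₂ s) ∧
        (∀ t' : ℝ, (∀ s : ℝ, A * Ψ₁ t' + B * Ψ₂ t' ≤ A * Ψ₁ s + B * Ψ₂ s) → t' = t) ∧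
        (B < A → 0 < t) ∧ (A = B → t = 0) ∧ (A < B → t < 0) :=
  router_minimizer_sign_general Ψ₁ Ψ₂ Ψ₁' Ψ₂' hΨ₁d hΨ₂d hΨ₂'pos hρanti hρrange hρ0
end

section
/- H-consistency transfer for the augmented deferral-advice surrogate: let 𝒳 be a measurable space with probability measure μ, Π a finite nonempty set, w : 𝒳 → (Π → ℝ) measurable and bounded with w_i(x) ≥ 0 and S := ∫ Σ_{i∈Π} w_i(x) dμ(x) > 0, and d : 𝒳 → ℝ integrable. Let H be a set of measurable score functions s : 𝒳 → (Π → ℝ), with dec(s) : 𝒳 → Π a measurable map satisfying dec(s)(x) ∈ argmax_{i∈Π} s(x)(i), and let Φ : (Π → ℝ) → Π → [0,∞) be a surrogate loss such that x ↦ Φ(s(x))(i) is measurable for every s ∈ H and i ∈ Π. For a measurable family p : 𝒳 → (Π → [0,1]) with Σ_{i∈Π} p_i(x) = 1 for all x, define C^p_{01}(π, x) := Σ_i p_i(x)·1{π(x) ≠ i} and C^p_Φ(s, x) := Σ_i p_i(x)·Φ(s(x))(i), and assume all the pointwise infima over H appearing below are measurable and integrable. Suppose Γ : [0,∞) → [0,∞)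 is nondecreasing and concave with Γ(0) = 0 and that the following base bound holds: for every probability measure ν on 𝒳, every measurable probability-weight family p as above, and every s ∈ H, ∫ C^p_{01}(dec(s), x) dν − ∫ inf_{s′∈H} C^p_{01}(dec(s′), x) dν ≤ Γ(∫ C^p_Φ(s, x) dν − ∫ inf_{s′∈H} C^p_Φ(s′, x) dν). Define C_ℓ(π, x) := d(x) + Σ_i w_i(x)·1{π(x) ≠ i}, C^{aug}_Φ(s, x) := Σ_i w_i(x)·Φ(s(x))(i), and Γ̃(u) := S·Γ(u/S). Then for every s ∈ H, ∫ C_ℓ(dec(s), x) dμ − ∫ inf_{s′∈H} C_ℓ(dec(s′), x) dμ ≤ Γ̃(∫ C^{aug}_Φ(s, x) dμ − ∫ inf_{s′∈H} C^{aug}_Φ(s′, x) dμ). -/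
/-!
Tilt `μ` by the total weight `W = ∑ᵢ wᵢ`, i.e. pass to the probability measure
`ν = (W / S) • μ`, and replace `w` by the conditional probabilities `p = w / W`. Then the
`ν`-expectation of any `p`-weighted loss is `S⁻¹` times the `μ`-expectation of the `w`-weighted
one, and by positive homogeneity of the infimum the same holds for the pointwise infima over `H`.
So the base bound for `(ν, p)` is the claimed bound divided by `S`. The offset `d` does not depend
on the hypothesis and cancels from the excess risk.
-/

open MeasureTheory

section ProbNormalize

variable {ι : Type*} [Fintype ι]

/-- The value at a zero vector only has to be some probability vector: such points carry no
tilted mass. -/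
noncomputable def probNormalize (v : ι → ℝ) (i : ι) : ℝ :=
  if ∑ j, v j = 0 then (Fintype.card ι : ℝ)⁻¹ else v i / ∑ j, v j

variable {v : ι → ℝ}

lemma probNormalize_nonneg (hv : ∀ i, 0 ≤ v i) (i : ι) : 0 ≤ probNormalize v i := by
  unfold probNormalize
  split_ifs
  · positivity
  · exact div_nonneg (hv i) (Finset.sum_nonneg fun j _ => hv j)

lemma sum_probNormalize [Nonempty ι] (v : ι → ℝ) : ∑ i, probNormalize v i = 1 := by
  unfold probNormalize
  split_ifs with h
  · simp
  · rw [← Finset.sum_div, div_self h]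

lemma sum_mul_probNormalize (hv : ∀ i, 0 ≤ v i) (i : ι) :
    (∑ j, v j) * probNormalize v i = v i := by
  unfold probNormalize
  split_ifs with h
  · rw [h, zero_mul,
      (Finset.sum_eq_zero_iff_of_nonneg fun j _ => hv j).1 h i (Finset.mem_univ i)]
  · exact mul_div_cancel₀ _ h

lemma sum_mul_sum_probNormalize_mul (hv : ∀ i, 0 ≤ v i) (g : ι → ℝ) :
    (∑ j, v j) * ∑ i, probNormalize v i * g i = ∑ i, v i * g i := by
  simp only [Finset.mul_sum, ← mul_assoc, sum_mul_probNormalize hv]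

lemma sum_mul_iInf_sum_probNormalize_mul {κ : Sort*} (hv : ∀ i, 0 ≤ v i)
    (F : κ → ι → ℝ) :
    (∑ j, v j) * ⨅ k, ∑ i, probNormalize v i * F k i = ⨅ k, ∑ i, v i * F k i := by
  simp only [Real.mul_iInf_of_nonneg (Finset.sum_nonneg fun j _ => hv j),
    sum_mul_sum_probNormalize_mul hv]

lemma measurable_probNormalize {X : Type*} [MeasurableSpace X] {w : X → ι → ℝ}
    (hw : ∀ i, Measurable fun x => w x i) (i : ι) :
    Measurable fun x => probNormalize (w x) i := by
  have hW : Measurable fun x => ∑ j, w x j := Finset.measurable_sum _ fun j _ => hw j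
  exact Measurable.ite (measurableSet_eq_fun hW measurable_const) measurable_const
    ((hw i).div hW)

end ProbNormalize

section Tilt

variable {X : Type*} [MeasurableSpace X] {μ : Measure X} {W : X → ℝ} {S : ℝ}

lemma isProbabilityMeasure_withDensity_ofReal_div (hWnn : ∀ x, 0 ≤ W x)
    (hS : ∫ x, W x ∂μ = S) (hSpos : 0 < S) :
    IsProbabilityMeasure (μ.withDensity fun x => ENNReal.ofReal (W x / S)) := by
  have hWint : Integrable W μ := .of_integral_ne_zero (hS ▸ hSpos.ne')
  constructor
  rw [withDensity_apply _ MeasurableSet.univ, Measure.restrict_univ,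
    ← ofReal_integral_eq_lintegral_ofReal (hWint.div_const S)
      (ae_of_all _ fun x => div_nonneg (hWnn x) hSpos.le),
    integral_div, hS, div_self hSpos.ne', ENNReal.ofReal_one]

lemma integral_withDensity_ofReal_div (hW : AEMeasurable W μ) (hWnn : ∀ x, 0 ≤ W x)
    (hS : 0 ≤ S) (g : X → ℝ) :
    ∫ x, g x ∂μ.withDensity (fun x => ENNReal.ofReal (W x / S)) =
      (∫ x, W x * g x ∂μ) / S := by
  rw [integral_withDensity_eq_integral_toReal_smul₀ (hW.div_const S).ennreal_ofReal
    (ae_of_all _ fun _ => ENNReal.ofReal_lt_top), ← integral_div]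
  refine integral_congr_ae (ae_of_all _ fun x => ?_)
  simp only [ENNReal.toReal_ofReal (div_nonneg (hWnn x) hS), smul_eq_mul]
  ring

end Tilt

lemma integral_add_sub_integral_iInf_add {X : Type*} [MeasurableSpace X] {μ : Measure X}
    {κ : Sort*} [Nonempty κ] {d g : X → ℝ} {f : κ → X → ℝ}
    (hd : Integrable d μ) (hg : Integrable g μ)
    (hf : ∀ x, BddBelow (Set.range fun k => f k x))
    (hinf : Integrable (fun x => ⨅ k, (d x + f k x)) μ) :
    ∫ x, (d x + g x) ∂μ - ∫ x, ⨅ k, (d x + f k x) ∂μ =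
      ∫ x, g x ∂μ - ∫ x, ⨅ k, f k x ∂μ := by
  have hshift : ∀ x, ⨅ k, (d x + f k x) = d x + ⨅ k, f k x := fun x =>
    ((OrderIso.addLeft (d x)).map_ciInf (hf x)).symm
  simp only [hshift] at hinf ⊢
  have hinf' : Integrable (fun x => ⨅ k, f k x) μ :=
    (hinf.sub hd).congr (ae_of_all _ fun x => add_sub_cancel_left (d x) _)
  rw [integral_add hd hg, integral_add hd hinf']
  ring

lemma integrable_sum_mul_of_nonneg_of_le_one {X ι : Type*} [MeasurableSpace X] [Fintype ι]
    {μ : Measure X} {w c : X → ι → ℝ} (hw : Integrable (fun x => ∑ i, w x i) μ)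
    (hwnn : ∀ x i, 0 ≤ w x i) (hwm : ∀ i, AEStronglyMeasurable (fun x => w x i) μ)
    (hcm : ∀ i, AEStronglyMeasurable (fun x => c x i) μ)
    (hc0 : ∀ x i, 0 ≤ c x i) (hc1 : ∀ x i, c x i ≤ 1) :
    Integrable (fun x => ∑ i, w x i * c x i) μ := by
  refine hw.mono' (Finset.aestronglyMeasurable_fun_sum _ fun i _ => (hwm i).mul (hcm i))
    (ae_of_all _ fun x => ?_)
  rw [Real.norm_of_nonneg (Finset.sum_nonneg fun i _ => mul_nonneg (hwnn x i) (hc0 x i))]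
  exact Finset.sum_le_sum fun i _ => mul_le_of_le_one_right (hwnn x i) (hc1 x i)

theorem h_consistency_transfer_augmented_general
    {𝒳 : Type*} [MeasurableSpace 𝒳] (μ : Measure 𝒳)
    {Act : Type*} [Fintype Act] [Nonempty Act] [DecidableEq Act]
    [MeasurableSpace Act] [MeasurableSingletonClass Act]
    (w : 𝒳 → Act → ℝ)
    (hwmeas : ∀ i, Measurable (fun x => w x i))
    (hwnn : ∀ x i, 0 ≤ w x i)
    (S : ℝ) (hS : S = ∫ x, ∑ i : Act, w x i ∂μ) (hSpos : 0 < S)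
    (d : 𝒳 → ℝ) (hd : Integrable d μ)
    (H : Set (𝒳 → Act → ℝ)) (hHne : H.Nonempty)
    (dec : (𝒳 → Act → ℝ) → 𝒳 → Act)
    (hdec_meas : ∀ s ∈ H, Measurable (dec s))
    (Φ : (Act → ℝ) → Act → ℝ)
    (Γ : ℝ → ℝ)
    -- base multiclass H-consistency bound, for every data distribution
    (hbase : ∀ ν : Measure 𝒳, IsProbabilityMeasure ν →
      ∀ p : 𝒳 → Act → ℝ, (∀ i, Measurable (fun x => p x i)) →
        (∀ x i, 0 ≤ p x i) → (∀ x, ∑ i : Act, p x i = 1) →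
      ∀ s ∈ H,
        ∫ x, (∑ i : Act, p x i * (if dec s x ≠ i then (1 : ℝ) else 0)) ∂ν
          - ∫ x, (⨅ s' : H, ∑ i : Act,
              p x i * (if dec s'.1 x ≠ i then (1 : ℝ) else 0)) ∂ν
        ≤ Γ (∫ x, (∑ i : Act, p x i * Φ (s x) i) ∂ν
          - ∫ x, (⨅ s' : H, ∑ i : Act, p x i * Φ (s'.1 x) i) ∂ν))
    -- integrability of the pointwise quantities appearing below
    (hinfℓ : Integrable (fun x =>
      ⨅ s' : H, (d x + ∑ i : Act,
        w x i * (if dec s'.1 x ≠ i then (1 : ℝ) else 0))) μ) :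
    ∀ s ∈ H,
      ∫ x, (d x + ∑ i : Act, w x i * (if dec s x ≠ i then (1 : ℝ) else 0)) ∂μ
        - ∫ x, (⨅ s' : H, (d x + ∑ i : Act,
            w x i * (if dec s'.1 x ≠ i then (1 : ℝ) else 0))) ∂μ
      ≤ S * Γ ((∫ x, (∑ i : Act, w x i * Φ (s x) i) ∂μ
          - ∫ x, (⨅ s' : H, ∑ i : Act, w x i * Φ (s'.1 x) i) ∂μ) / S) := by
  intro s hs
  have : Nonempty H := hHne.to_subtype
  have hW : Measurable fun x => ∑ i, w x i := Finset.measurable_sum _ fun i _ => hwmeas i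
  have hWnn : ∀ x, 0 ≤ ∑ i, w x i := fun x => Finset.sum_nonneg fun i _ => hwnn x i
  have hWint : Integrable (fun x => ∑ i, w x i) μ := .of_integral_ne_zero (hS ▸ hSpos.ne')
  have hmismatch_nonneg :
      ∀ (π : 𝒳 → Act) x, 0 ≤ ∑ i, w x i * (if π x ≠ i then (1 : ℝ) else 0) :=
    fun π x => Finset.sum_nonneg fun i _ => mul_nonneg (hwnn x i) (by split_ifs <;> norm_num)
  have hmismatch_int : Integrable
      (fun x => ∑ i, w x i * (if dec s x ≠ i then (1 : ℝ) else 0)) μ :=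
    integrable_sum_mul_of_nonneg_of_le_one hWint hwnn (fun i => (hwmeas i).aestronglyMeasurable)
      (fun i => (Measurable.ite (hdec_meas s hs (measurableSet_singleton i)).compl
        measurable_const measurable_const).aestronglyMeasurable)
      (fun _ _ => by split_ifs <;> norm_num) (fun _ _ => by split_ifs <;> norm_num)
  rw [integral_add_sub_integral_iInf_add hd hmismatch_int
      (fun x => ⟨0, Set.forall_mem_range.2 fun s' => hmismatch_nonneg _ x⟩) hinfℓ,
    ← div_le_iff₀' hSpos, sub_div]
  have hbound := hbase _ (isProbabilityMeasure_withDensity_ofReal_div hWnn hS.symm hSpos)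
    (fun x => probNormalize (w x)) (measurable_probNormalize hwmeas)
    (fun x => probNormalize_nonneg (hwnn x)) (fun x => sum_probNormalize (w x)) s hs
  simpa only [integral_withDensity_ofReal_div hW.aemeasurable hWnn hSpos.le,
    sum_mul_sum_probNormalize_mul (hwnn _), sum_mul_iInf_sum_probNormalize_mul (hwnn _),
    sub_div] using hbound

/-- **H-consistency transfer for the augmented deferral-advice surrogate**
(Theorem 2 of the paper). `Act` is the finite nonempty composite action set
(the paper's `Π = [J]×[K]₀`), `w` the conditional mismatch weights with total mass
`S > 0`, `d` the action-independent offset, `H` a class of score functions with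
decoding `dec`, `Φ` a nonnegative surrogate loss, and `Γ` a nondecreasing concave
transfer function with `Γ(0) = 0` for which the multiclass H-consistency bound holds
for every probability measure `ν` and probability-weight family `p`. Then the
deferral-advice excess risk (including minimizability gaps) is bounded by
`Γ̃(u) = S·Γ(u/S)` applied to the augmented surrogate excess risk. -/
theorem h_consistency_transfer_augmented
    {𝒳 : Type*} [MeasurableSpace 𝒳] (μ : Measure 𝒳) [IsProbabilityMeasure μ]
    {Act : Type*} [Fintype Act] [Nonempty Act] [DecidableEq Act]
    [MeasurableSpace Act] [MeasurableSingletonClass Act]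
    (w : 𝒳 → Act → ℝ)
    (hwmeas : ∀ i, Measurable (fun x => w x i))
    (hwbdd : ∃ M : ℝ, ∀ x i, |w x i| ≤ M)
    (hwnn : ∀ x i, 0 ≤ w x i)
    (S : ℝ) (hS : S = ∫ x, ∑ i : Act, w x i ∂μ) (hSpos : 0 < S)
    (d : 𝒳 → ℝ) (hd : Integrable d μ)
    (H : Set (𝒳 → Act → ℝ)) (hHne : H.Nonempty)
    (dec : (𝒳 → Act → ℝ) → 𝒳 → Act)
    (hdec_meas : ∀ s ∈ H, Measurable (dec s))
    (hdec_argmax : ∀ s ∈ H, ∀ x i, s x i ≤ s x (dec s x))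
    (Φ : (Act → ℝ) → Act → ℝ)
    (hΦnn : ∀ v i, 0 ≤ Φ v i)
    (hΦmeas : ∀ s ∈ H, ∀ i, Measurable (fun x => Φ (s x) i))
    (Γ : ℝ → ℝ)
    (hΓ0 : Γ 0 = 0)
    (hΓmono : MonotoneOn Γ (Set.Ici 0))
    (hΓconc : ConcaveOn ℝ (Set.Ici 0) Γ)
    (hΓnn : ∀ u : ℝ, 0 ≤ u → 0 ≤ Γ u)
    -- base multiclass H-consistency bound, for every data distribution
    (hbase : ∀ ν : Measure 𝒳, IsProbabilityMeasure ν →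
      ∀ p : 𝒳 → Act → ℝ, (∀ i, Measurable (fun x => p x i)) →
        (∀ x i, 0 ≤ p x i) → (∀ x, ∑ i : Act, p x i = 1) →
      ∀ s ∈ H,
        ∫ x, (∑ i : Act, p x i * (if dec s x ≠ i then (1 : ℝ) else 0)) ∂ν
          - ∫ x, (⨅ s' : H, ∑ i : Act,
              p x i * (if dec s'.1 x ≠ i then (1 : ℝ) else 0)) ∂ν
        ≤ Γ (∫ x, (∑ i : Act, p x i * Φ (s x) i) ∂ν
          - ∫ x, (⨅ s' : H, ∑ i : Act, p x i * Φ (s'.1 x) i) ∂ν))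
    -- integrability of the pointwise quantities appearing below
    (hintΦ : ∀ s ∈ H, Integrable (fun x => ∑ i : Act, w x i * Φ (s x) i) μ)
    (hinfℓ : Integrable (fun x =>
      ⨅ s' : H, (d x + ∑ i : Act,
        w x i * (if dec s'.1 x ≠ i then (1 : ℝ) else 0))) μ)
    (hinfΦ : Integrable (fun x => ⨅ s' : H, ∑ i : Act, w x i * Φ (s'.1 x) i) μ) :
    ∀ s ∈ H,
      ∫ x, (d x + ∑ i : Act, w x i * (if dec s x ≠ i then (1 : ℝ) else 0)) ∂μ
        - ∫ x, (⨅ s' : H, (d x + ∑ i : Act,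
            w x i * (if dec s'.1 x ≠ i then (1 : ℝ) else 0))) ∂μ
      ≤ S * Γ ((∫ x, (∑ i : Act, w x i * Φ (s x) i) ∂μ
          - ∫ x, (⨅ s' : H, ∑ i : Act, w x i * Φ (s'.1 x) i) ∂μ) / S) :=
  h_consistency_transfer_augmented_general μ w hwmeas hwnn S hS hSpos d hd H hHne dec hdec_meas Φ Γ
    hbase hinfℓ
end

section
/- Certified profiled-summary reversal for the basic logistic separated surrogate: define F₀(u, v) := inf_{t ∈ ℝ} [u·log(1 + e^{−t}) + v·log(1 + e^{t})] for u, v > 0. Then F₀(19/50, 27/25) > F₀(1/2, 51/100). (That is, for the cost table with first row (0.38, 1.08) and second row (0.50, 0.51), the profiled summary of the first row strictly exceeds that of the second, even though the first row has the strictly smaller row minimum 0.38 < 0.50.) -/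
open Real

/-- Expert summary of the basic logistic separated surrogate:
`F₀(u,v) = inf_t [u·log(1+e^{−t}) + v·log(1+e^{t})]`. -/
noncomputable def F0 (u v : ℝ) : ℝ :=
  ⨅ t : ℝ, (u * Real.log (1 + Real.exp (-t)) + v * Real.log (1 + Real.exp t))

/-- Gibbs-type lower bound: the logistic separated surrogate at any `t` is at least
the closed-form minimum `u·log((u+v)/u) + v·log((u+v)/v)`. -/
lemma gibbs_lb (u v t : ℝ) (hu : 0 < u) (hv : 0 < v) :
    u * Real.log ((u + v) / u) + v * Real.log ((u + v) / v) ≤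
      u * Real.log (1 + Real.exp (-t)) + v * Real.log (1 + Real.exp t) := by
  set A := 1 + Real.exp (-t) with hA
  set B := 1 + Real.exp t with hB
  have hApos : 0 < A := by positivity
  have hBpos : 0 < B := by positivity
  have hAB : A + B = A * B := by
    have : Real.exp (-t) * Real.exp t = 1 := by
      rw [← Real.exp_add]; simp
    simp only [hA, hB]; ring_nf; nlinarith [this]
  have huv : 0 < u + v := by linarith
  have h1 : Real.log ((u + v) / (u * A)) ≤ (u + v) / (u * A) - 1 :=
    Real.log_le_sub_one_of_pos (by positivity)
  have h2 : Real.log ((u + v) / (v * B)) ≤ (u + v) / (v * B) - 1 :=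
    Real.log_le_sub_one_of_pos (by positivity)
  have e1 : Real.log ((u + v) / (u * A)) = Real.log ((u + v) / u) - Real.log A := by
    rw [Real.log_div (by positivity) (by positivity), Real.log_mul (ne_of_gt hu) (ne_of_gt hApos),
      Real.log_div (by positivity) (ne_of_gt hu)]
    ring
  have e2 : Real.log ((u + v) / (v * B)) = Real.log ((u + v) / v) - Real.log B := by
    rw [Real.log_div (by positivity) (by positivity), Real.log_mul (ne_of_gt hv) (ne_of_gt hBpos),
      Real.log_div (by positivity) (ne_of_gt hv)]
    ring
  rw [e1] at h1
  rw [e2] at h2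
  have k1 : u * (Real.log ((u + v) / u) - Real.log A) ≤ (u + v) / A - u := by
    have := mul_le_mul_of_nonneg_left h1 hu.le
    have heq : u * ((u + v) / (u * A) - 1) = (u + v) / A - u := by
      field_simp
    linarith [heq ▸ this]
  have k2 : v * (Real.log ((u + v) / v) - Real.log B) ≤ (u + v) / B - v := by
    have := mul_le_mul_of_nonneg_left h2 hv.le
    have heq : v * ((v + u) / (v * B) - 1) = (v + u) / B - v := by
      field_simp
    have h' : v * ((u + v) / (v * B) - 1) = (u + v) / B - v := by
      rw [show u + v = v + u by ring]; exact heq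
    linarith [h' ▸ this]
  have hsum : (u + v) / A + (u + v) / B = u + v := by
    field_simp
    nlinarith [hAB]
  nlinarith [k1, k2, hsum]

/-- The surrogate value at `t = log(a/b)` equals the closed-form minimum, giving the
upper bound `F0 u v ≤ u·log((u+v)/u) + v·log((u+v)/v)`. -/
lemma F0_le (u v : ℝ) (hu : 0 < u) (hv : 0 < v) :
    F0 u v ≤ u * Real.log ((u + v) / u) + v * Real.log ((u + v) / v) := by
  have hbdd : BddBelow (Set.range fun t : ℝ =>
      u * Real.log (1 + Real.exp (-t)) + v * Real.log (1 + Real.exp t)) := by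
    refine ⟨u * Real.log ((u + v) / u) + v * Real.log ((u + v) / v), ?_⟩
    rintro x ⟨t, rfl⟩
    exact gibbs_lb u v t hu hv
  have := ciInf_le hbdd (Real.log (u / v))
  have hexp : Real.exp (Real.log (u / v)) = u / v := Real.exp_log (by positivity)
  have hexpn : Real.exp (-(Real.log (u / v))) = v / u := by
    rw [Real.exp_neg, hexp]
    rw [inv_div]
  rw [hexp, hexpn] at this
  have e1 : 1 + v / u = (u + v) / u := by field_simp
  have e2 : 1 + u / v = (u + v) / v := by field_simp; ring
  rw [e1, e2] at this
  exact this

lemma F0_ge (u v : ℝ) (hu : 0 < u) (hv : 0 < v) :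
    u * Real.log ((u + v) / u) + v * Real.log ((u + v) / v) ≤ F0 u v :=
  le_ciInf fun t => gibbs_lb u v t hu hv

/-- **Certified profiled-summary reversal for the basic logistic separated surrogate.**
For the cost table with first row `(0.38, 1.08)` and second row `(0.50, 0.51)`, the
profiled summary of the first row strictly exceeds that of the second, even though the
first row has the strictly smaller row minimum. -/
theorem certified_profiled_summary_reversal :
    F0 (1 / 2) (51 / 100) < F0 (19 / 50) (27 / 25) := by
  have h1 : F0 (1 / 2) (51 / 100) ≤
      (1 / 2 : ℝ) * Real.log (101 / 50) + (51 / 100) * Real.log (101 / 51) := by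
    have := F0_le (1 / 2) (51 / 100) (by norm_num) (by norm_num)
    norm_num at this ⊢
    convert this using 3
  have h2 : (19 / 50 : ℝ) * Real.log (73 / 19) + (27 / 25) * Real.log (73 / 54) ≤
      F0 (19 / 50) (27 / 25) := by
    have := F0_ge (19 / 50) (27 / 25) (by norm_num) (by norm_num)
    have e1 : ((19 : ℝ) / 50 + 27 / 25) / (19 / 50) = 73 / 19 := by norm_num
    have e2 : ((19 : ℝ) / 50 + 27 / 25) / (27 / 25) = 73 / 54 := by norm_num
    rw [e1, e2] at this
    exact this
  -- numeric comparison
  have l2l : (0.6931471803 : ℝ) < Real.log 2 := Real.log_two_gt_d9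
  have l2u : Real.log 2 < 0.6931471808 := Real.log_two_lt_d9
  -- upper bounds for LHS logs
  have u1 : Real.log (101 / 50) ≤ Real.log 2 + 1 / 100 := by
    have : (101 / 50 : ℝ) = 2 * (101 / 100) := by norm_num
    rw [this, Real.log_mul (by norm_num) (by norm_num)]
    have := Real.log_le_sub_one_of_pos (show (0:ℝ) < 101 / 100 by norm_num)
    linarith
  have u2 : Real.log (101 / 51) ≤ Real.log 2 - 1 / 102 := by
    have : (101 / 51 : ℝ) = 2 * (101 / 102) := by norm_num
    rw [this, Real.log_mul (by norm_num) (by norm_num)]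
    have := Real.log_le_sub_one_of_pos (show (0:ℝ) < 101 / 102 by norm_num)
    linarith
  -- lower bounds for RHS logs
  have v1 : 2 * Real.log 2 - 3 / 73 ≤ Real.log (73 / 19) := by
    have he : (73 / 19 : ℝ) = 2 * 2 * (73 / 76) := by norm_num
    rw [he, Real.log_mul (by norm_num) (by norm_num), Real.log_mul (by norm_num) (by norm_num)]
    have := Real.one_sub_inv_le_log_of_pos (show (0:ℝ) < 73 / 76 by norm_num)
    have h' : (1 : ℝ) - (73 / 76 : ℝ)⁻¹ = -3 / 73 * (76 / 73) * (73 / 76) := by norm_num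
    nlinarith [this]
  have v2 : (Real.log 2 - 503 / 5329) / 2 ≤ Real.log (73 / 54) := by
    have hsq : Real.log ((73 / 54 : ℝ) ^ 2) = 2 * Real.log (73 / 54) := by
      rw [Real.log_pow]; push_cast; ring
    have he : ((73 / 54 : ℝ)) ^ 2 = 2 * (5329 / 5832) := by norm_num
    have := Real.one_sub_inv_le_log_of_pos (show (0:ℝ) < 5329 / 5832 by norm_num)
    have hinv : (1 : ℝ) - (5329 / 5832 : ℝ)⁻¹ = -503 / 5329 := by norm_num
    rw [hinv] at this
    have hlog : Real.log ((73 / 54 : ℝ) ^ 2) = Real.log 2 + Real.log (5329 / 5832) := by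
      rw [he, Real.log_mul (by norm_num) (by norm_num)]
    linarith [hsq ▸ hlog]
  calc F0 (1 / 2) (51 / 100)
      ≤ (1 / 2 : ℝ) * Real.log (101 / 50) + (51 / 100) * Real.log (101 / 51) := h1
    _ < (19 / 50 : ℝ) * Real.log (73 / 19) + (27 / 25) * Real.log (73 / 54) := by
        nlinarith [u1, u2, v1, v2, l2l, l2u]
    _ ≤ F0 (19 / 50) (27 / 25) := h2
end
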